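/- arXiv:0712.3091 — 2 statements merged into one kernel-verified Lean document; each statement's English description precedes it below -/
import Mathlib

section
/- Let d ≥ 1 and n ≥ 2 be integers. If a real polynomial Q in d variables satisfies L_1 Q = −(n−2)(n+d) Q, then the polynomial P(x) = (1−‖x‖²)Q(x) satisfies L_{−1} P = −n(n+d−2) P. -/
open MvPolynomial

/-- The Laplacian `Δ = ∑ ∂²/∂xᵢ²` acting on polynomials in `d` variables. -/
noncomputable def lap {d : ℕ} (P : MvPolynomial (Fin d) ℝ) : MvPolynomial (Fin d) ℝ :=
  ∑ i, pderiv i (pderiv i P)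

/-- The Euler operator `⟨x,∇⟩ = ∑ xᵢ ∂/∂xᵢ` acting on polynomials in `d` variables. -/
noncomputable def eulerOp {d : ℕ} (P : MvPolynomial (Fin d) ℝ) : MvPolynomial (Fin d) ℝ :=
  ∑ i, X i * pderiv i P

/-- The operator `L_μ P = ΔP − ⟨x,∇⟩²P − (2μ+d)⟨x,∇⟩P`. -/
noncomputable def Lop (d : ℕ) (μ : ℝ) (P : MvPolynomial (Fin d) ℝ) : MvPolynomial (Fin d) ℝ :=
  lap P - eulerOp (eulerOp P) - (2 * μ + (d : ℝ)) • eulerOp P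

/-- The polynomial `‖x‖² = x₁² + ⋯ + x_d²`. -/
noncomputable def normSq (d : ℕ) : MvPolynomial (Fin d) ℝ := ∑ i, X i ^ 2

/-! The proof rests on one intertwining identity: multiplication by `1 - ‖x‖²` conjugates
`L_{-1}` to a shift of `L_1`,
`L_{-1}((1 - ‖x‖²) Q) = (1 - ‖x‖²) (L_1 Q - 2d Q)`.
It follows from the Leibniz rules for `Δ` and `⟨x,∇⟩` together with `⟨x,∇⟩‖x‖² = 2‖x‖²`,
`Δ‖x‖² = 2d` and `⟨∇‖x‖², ∇Q⟩ = 2⟨x,∇⟩Q`. The eigenvalue then moves from `-(n-2)(n+d)` to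
`-(n-2)(n+d) - 2d = -n(n+d-2)`. -/

section

variable {d : ℕ}

lemma eulerOp_add (P R : MvPolynomial (Fin d) ℝ) : eulerOp (P + R) = eulerOp P + eulerOp R := by
  simp only [eulerOp, map_add, mul_add, Finset.sum_add_distrib]

lemma eulerOp_sub (P R : MvPolynomial (Fin d) ℝ) : eulerOp (P - R) = eulerOp P - eulerOp R := by
  simp only [eulerOp, map_sub, mul_sub, Finset.sum_sub_distrib]

lemma eulerOp_C_mul (r : ℝ) (P : MvPolynomial (Fin d) ℝ) :
    eulerOp (C r * P) = C r * eulerOp P := by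
  simp only [eulerOp, pderiv_C_mul, Finset.mul_sum, mul_left_comm]

lemma eulerOp_mul (P R : MvPolynomial (Fin d) ℝ) :
    eulerOp (P * R) = eulerOp P * R + P * eulerOp R := by
  simp only [eulerOp, Finset.sum_mul, Finset.mul_sum, ← Finset.sum_add_distrib]
  exact Finset.sum_congr rfl fun i _ => by rw [pderiv_mul]; ring

lemma lap_sub (P R : MvPolynomial (Fin d) ℝ) : lap (P - R) = lap P - lap R := by
  simp only [lap, map_sub, Finset.sum_sub_distrib]

lemma lap_mul (P R : MvPolynomial (Fin d) ℝ) :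
    lap (P * R) = lap P * R + 2 * ∑ i, pderiv i P * pderiv i R + P * lap R := by
  simp only [lap, Finset.sum_mul, Finset.mul_sum, ← Finset.sum_add_distrib]
  exact Finset.sum_congr rfl fun i _ => by rw [pderiv_mul, map_add, pderiv_mul, pderiv_mul]; ring

lemma pderiv_normSq (i : Fin d) : pderiv i (normSq d) = 2 * X i := by
  rw [normSq, map_sum, Finset.sum_eq_single i]
  · rw [pderiv_pow, pderiv_X_self]; ring
  · intro j _ hj
    rw [pderiv_pow, pderiv_X_of_ne hj, mul_zero]
  · simp

lemma eulerOp_normSq_mul (P : MvPolynomial (Fin d) ℝ) :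
    eulerOp (normSq d * P) = 2 * (normSq d * P) + normSq d * eulerOp P := by
  have hS : eulerOp (normSq d) = 2 * normSq d := by
    simp only [eulerOp, pderiv_normSq]
    rw [normSq, Finset.mul_sum]
    exact Finset.sum_congr rfl fun i _ => by ring
  rw [eulerOp_mul, hS, mul_assoc]

lemma lap_normSq_mul (P : MvPolynomial (Fin d) ℝ) :
    lap (normSq d * P) = 2 * d * P + 4 * eulerOp P + normSq d * lap P := by
  have hS : lap (normSq d) = 2 * d := by
    have h2 (i : Fin d) : pderiv i (2 : MvPolynomial (Fin d) ℝ) = 0 := by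
      simpa using (pderiv i).map_natCast 2
    simp [lap, pderiv_normSq, h2, mul_comm]
  have hcross : ∑ i, pderiv i (normSq d) * pderiv i P = 2 * eulerOp P := by
    simp only [eulerOp, pderiv_normSq, Finset.mul_sum, mul_assoc]
  rw [lap_mul, hS, hcross]
  ring

theorem Lop_neg_one_one_sub_normSq_mul (Q : MvPolynomial (Fin d) ℝ) :
    Lop d (-1) ((1 - normSq d) * Q) = (1 - normSq d) * (Lop d 1 Q - (2 * d : ℝ) • Q) := by
  have hEulerSq : eulerOp (eulerOp (normSq d * Q)) =
      4 * (normSq d * Q) + 4 * (normSq d * eulerOp Q) + normSq d * eulerOp (eulerOp Q) := by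
    rw [eulerOp_normSq_mul, eulerOp_add, ← map_ofNat C 2, eulerOp_C_mul, map_ofNat,
      eulerOp_normSq_mul, eulerOp_normSq_mul]
    ring
  rw [Lop, Lop, sub_mul, one_mul, lap_sub, eulerOp_sub, eulerOp_sub, hEulerSq, lap_normSq_mul,
    eulerOp_normSq_mul]
  simp only [smul_eq_C_mul, map_add, map_mul, map_neg, map_ofNat, map_natCast, map_one]
  ring

end

theorem stmt2_general (d : ℕ) (n : ℕ) (Q : MvPolynomial (Fin d) ℝ)
    (hQ : Lop d 1 Q = (-((n : ℝ) - 2) * ((n : ℝ) + (d : ℝ))) • Q) :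
    Lop d (-1) ((1 - normSq d) * Q) =
      (-(n : ℝ) * ((n : ℝ) + (d : ℝ) - 2)) • ((1 - normSq d) * Q) := by
  rw [Lop_neg_one_one_sub_normSq_mul, hQ, ← sub_smul, mul_smul_comm]
  congr 1
  ring

/-- if `L_1 Q = −(n−2)(n+d) Q` then `P = (1−‖x‖²)Q` satisfies
`L_{−1} P = −n(n+d−2) P`. -/
theorem stmt2 (d : ℕ) (hd : 1 ≤ d) (n : ℕ) (hn : 2 ≤ n) (Q : MvPolynomial (Fin d) ℝ)
    (hQ : Lop d 1 Q = (-((n : ℝ) - 2) * ((n : ℝ) + (d : ℝ))) • Q) :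
    Lop d (-1) ((1 - normSq d) * Q) =
      (-(n : ℝ) * ((n : ℝ) + (d : ℝ) - 2)) • ((1 - normSq d) * Q) :=
  stmt2_general d n Q hQ
end

section
/- Let d ≥ 1 and λ > 0, and let n > m ≥ 0 be integers. Suppose P is either a harmonic polynomial homogeneous of degree n, or P = (1−‖x‖²)Q where Q has degree n−2 and ⟨Q, h⟩_Δ = 0 for all polynomials h of degree ≤ n−3; and suppose g is either a harmonic polynomial homogeneous of degree m, or g = (1−‖x‖²)h where h has degree m−2 and ⟨h, u⟩_Δ = 0 for all polynomials u of degree ≤ m−3. Then ⟨P, g⟩_{−2} = 0. Moreover, for Y a harmonic polynomial homogeneous of degree n and Q of degree n−2 with ⟨Q, h⟩_Δ = 0 for all h of degree ≤ n−3, one has ⟨Y, (1−‖x‖²)Q⟩_{−2} = 0. -/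
open MvPolynomial MeasureTheory

/-- Evaluation of a polynomial at a point of Euclidean space. -/
noncomputable def evalP {d : ℕ} (f : MvPolynomial (Fin d) ℝ)
    (x : EuclideanSpace ℝ (Fin d)) : ℝ :=
  MvPolynomial.eval (fun i => x i) f

/-- The closed unit ball `B^d ⊆ ℝ^d`. -/
noncomputable def ballD (d : ℕ) : Set (EuclideanSpace ℝ (Fin d)) :=
  Metric.closedBall 0 1

/-- The surface measure `dω` on the unit sphere `S^{d−1}`. -/
noncomputable def sphereMeas (d : ℕ) :
    Measure (Metric.sphere (0 : EuclideanSpace ℝ (Fin d)) 1) :=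
  (volume : Measure (EuclideanSpace ℝ (Fin d))).toSphere

/-- The total surface area `ω_d = ∫_{S^{d−1}} dω`. -/
noncomputable def omegaD (d : ℕ) : ℝ := (sphereMeas d Set.univ).toReal

/-- The volume of the unit ball `B^d`. -/
noncomputable def volB (d : ℕ) : ℝ := (volume (ballD d)).toReal

/-- The inner product
`⟨f,g⟩_{−2} = (λ/ω_d) ∫_{B^d} Δf Δg dx + (1/ω_d) ∫_{S^{d−1}} f g dω`. -/
noncomputable def innerNeg2 (d : ℕ) (lam : ℝ) (f g : MvPolynomial (Fin d) ℝ) : ℝ :=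
  (lam / omegaD d) * ∫ x in ballD d, evalP (lap f) x * evalP (lap g) x +
    (1 / omegaD d) * ∫ y : Metric.sphere (0 : EuclideanSpace ℝ (Fin d)) 1,
      evalP f y * evalP g y ∂(sphereMeas d)

/-- The inner product
`⟨f,g⟩_Δ = a_d ∫_{B^d} Δ[(1−‖x‖²)f] Δ[(1−‖x‖²)g] dx`, `a_d = 1/(4d² vol(B^d))`. -/
noncomputable def innerDelta (d : ℕ) (f g : MvPolynomial (Fin d) ℝ) : ℝ :=
  (1 / (4 * (d : ℝ) ^ 2 * volB d)) *
    ∫ x in ballD d,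
      evalP (lap ((1 - normSq d) * f)) x * evalP (lap ((1 - normSq d) * g)) x

/-!
The Laplacian term of `⟨·,·⟩_{−2}` vanishes as soon as one factor is harmonic, and the boundary
term vanishes as soon as one factor is a multiple of `1 − ‖x‖²`, which is zero on the sphere.
When both factors are such multiples, the Laplacian term is a multiple of `⟨Q, h⟩_Δ`, which is
zero since `deg h + 2 = m < n`. What remains is the boundary integral of two harmonic homogeneous
polynomials `f`, `g` of different degrees `n ≠ m`. Polar coordinates turn it into a positive
multiple of the Gaussian integral `G(f g) = ∫ f g e^{−‖x‖²}`, and Gaussian integration by parts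
`G(xᵢ p) = G(∂ᵢ p) / 2` together with Euler's identity gives `2 m G(f g) = ∑ᵢ G(∂ᵢ f ∂ᵢ g)`, which
is symmetric in `f` and `g`; hence `(m − n) G(f g) = 0`.
-/

open Real Set

noncomputable def gaussMoment (k : ℕ) : ℝ := ∫ t : ℝ, t ^ k * exp (-t ^ 2)

lemma integrable_pow_mul_exp_neg_sq (k : ℕ) : Integrable fun t : ℝ => t ^ k * exp (-t ^ 2) := by
  simpa [rpow_natCast] using integrable_rpow_mul_exp_neg_mul_sq (b := 1) one_pos (s := k)
    (by linarith [k.cast_nonneg (α := ℝ)])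

lemma gaussMoment_succ (k : ℕ) : gaussMoment (k + 1) = k / 2 * gaussMoment (k - 1) := by
  have hv (t : ℝ) : HasDerivAt (fun t : ℝ => -exp (-t ^ 2) / 2) (t * exp (-t ^ 2)) t := by
    refine ((((hasDerivAt_pow 2 t).fun_neg.exp).fun_neg).div_const 2).congr_deriv ?_
    push_cast; ring
  have ibp := integral_mul_deriv_eq_deriv_mul_of_integrable (fun t _ => hasDerivAt_pow k t)
    (fun t _ => hv t) ?_ ?_ ?_
  · unfold gaussMoment
    simp only [pow_succ, mul_assoc] at ibp ⊢
    rw [ibp, ← integral_const_mul, ← integral_neg]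
    congr 1; ext t; ring
  · convert integrable_pow_mul_exp_neg_sq (k + 1) using 1
    ext t; simp only [Pi.mul_apply]; ring
  · convert (integrable_pow_mul_exp_neg_sq (k - 1)).const_mul (-k / 2 : ℝ) using 1
    ext t; simp only [Pi.mul_apply]; ring
  · convert (integrable_pow_mul_exp_neg_sq k).const_mul (-1 / 2 : ℝ) using 1
    ext t; simp only [Pi.mul_apply]; ring

section GaussianIntegral

variable {d : ℕ}

lemma eval_monomial_mul_exp_neg_sum_sq (γ : Fin d →₀ ℕ) (c : ℝ) (v : Fin d → ℝ) :
    eval v (monomial γ c) * exp (-∑ i, v i ^ 2) = c * ∏ i, (v i ^ γ i * exp (-v i ^ 2)) := by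
  rw [eval_monomial, Finsupp.prod_fintype _ _ (fun _ => pow_zero _), Finset.prod_mul_distrib,
    ← exp_sum, ← Finset.sum_neg_distrib, mul_assoc]

lemma integrable_eval_mul_exp_neg_sum_sq (p : MvPolynomial (Fin d) ℝ) :
    Integrable fun v : Fin d → ℝ => eval v p * exp (-∑ i, v i ^ 2) := by
  induction p using MvPolynomial.induction_on' with
  | monomial γ c =>
    simp_rw [eval_monomial_mul_exp_neg_sum_sq]
    exact (Integrable.fintype_prod (f := fun i (t : ℝ) => t ^ γ i * exp (-t ^ 2))
      fun i => integrable_pow_mul_exp_neg_sq (γ i)).const_mul c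
  | add p q hp hq =>
    simp only [map_add, add_mul]
    exact hp.add hq

noncomputable def gaussianIntegral (d : ℕ) : MvPolynomial (Fin d) ℝ →ₗ[ℝ] ℝ where
  toFun p := ∫ v : Fin d → ℝ, eval v p * exp (-∑ i, v i ^ 2)
  map_add' p q := by
    simp only [map_add, add_mul]
    exact integral_add (integrable_eval_mul_exp_neg_sum_sq p)
      (integrable_eval_mul_exp_neg_sum_sq q)
  map_smul' c p := by
    simp only [smul_eval, mul_assoc, integral_const_mul, RingHom.id_apply, smul_eq_mul]

lemma gaussianIntegral_monomial (γ : Fin d →₀ ℕ) (c : ℝ) :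
    gaussianIntegral d (monomial γ c) = c * ∏ i, gaussMoment (γ i) := by
  simp only [gaussianIntegral, LinearMap.coe_mk, AddHom.coe_mk,
    eval_monomial_mul_exp_neg_sum_sq, integral_const_mul]
  rw [integral_fintype_prod_volume_eq_prod (fun i (t : ℝ) => t ^ γ i * exp (-t ^ 2))]
  rfl

lemma gaussianIntegral_X_mul (i : Fin d) (p : MvPolynomial (Fin d) ℝ) :
    gaussianIntegral d (X i * p) = gaussianIntegral d (pderiv i p) / 2 := by
  induction p using MvPolynomial.induction_on' with
  | monomial γ c =>
    rw [X, monomial_mul, one_mul, pderiv_monomial, gaussianIntegral_monomial,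
      gaussianIntegral_monomial, ← Finset.mul_prod_erase _ _ (Finset.mem_univ i),
      ← Finset.mul_prod_erase _ (fun j => gaussMoment ((γ - Finsupp.single i 1 : Fin d →₀ ℕ) j))
        (Finset.mem_univ i)]
    have hoff : ∀ j ∈ Finset.univ.erase i,
        (Finsupp.single i 1 + γ : Fin d →₀ ℕ) j = (γ - Finsupp.single i 1 : Fin d →₀ ℕ) j :=
      fun j hj => by simp [Finsupp.single_eq_of_ne (Finset.ne_of_mem_erase hj)]
    rw [Finset.prod_congr rfl fun j hj => congrArg gaussMoment (hoff j hj)]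
    simp only [Finsupp.add_apply, Finsupp.tsub_apply, Finsupp.single_eq_same, add_comm 1,
      gaussMoment_succ]
    ring
  | add p q hp hq => simp only [mul_add, map_add, hp, hq, add_div]

end GaussianIntegral

section Harmonic

variable {d : ℕ}

lemma two_mul_natCast_mul_gaussianIntegral_mul {m : ℕ} {g : MvPolynomial (Fin d) ℝ}
    (hg : g.IsHomogeneous m) (p : MvPolynomial (Fin d) ℝ) :
    2 * m * gaussianIntegral d (p * g) =
      ∑ i, gaussianIntegral d (pderiv i p * pderiv i g) + gaussianIntegral d (p * lap g) := by
  have euler : (m : ℝ) • g = ∑ i, X i * pderiv i g := by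
    rw [hg.sum_X_mul_pderiv, Nat.cast_smul_eq_nsmul]
  calc 2 * m * gaussianIntegral d (p * g)
      = 2 * gaussianIntegral d (p * ((m : ℝ) • g)) := by
        rw [mul_smul_comm, map_smul, smul_eq_mul, mul_assoc]
    _ = 2 * ∑ i, gaussianIntegral d (X i * (p * pderiv i g)) := by
        rw [euler, Finset.mul_sum, map_sum]
        simp only [mul_left_comm p]
    _ = ∑ i, gaussianIntegral d (pderiv i (p * pderiv i g)) := by
        simp only [gaussianIntegral_X_mul, Finset.mul_sum,
          mul_div_cancel₀ _ (two_ne_zero (α := ℝ))]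
    _ = _ := by
        simp only [pderiv_mul, map_add, Finset.sum_add_distrib, lap, Finset.mul_sum, map_sum]

lemma gaussianIntegral_mul_eq_zero_of_harmonic {n m : ℕ} {f g : MvPolynomial (Fin d) ℝ}
    (hf : f.IsHomogeneous n) (hg : g.IsHomogeneous m) (hlf : lap f = 0) (hlg : lap g = 0)
    (hnm : n ≠ m) : gaussianIntegral d (f * g) = 0 := by
  have hfg := two_mul_natCast_mul_gaussianIntegral_mul hg f
  have hgf := two_mul_natCast_mul_gaussianIntegral_mul hf g
  simp only [hlf, hlg, mul_zero, map_zero, add_zero, mul_comm g f, mul_comm (pderiv _ g)]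
    at hfg hgf
  have : (2 * ((m : ℝ) - n)) * gaussianIntegral d (f * g) = 0 := by linarith
  exact (mul_eq_zero.mp this).resolve_left
    (mul_ne_zero two_ne_zero (sub_ne_zero.mpr (by exact_mod_cast hnm.symm)))

end Harmonic

theorem MvPolynomial.IsHomogeneous.eval_smul {σ R : Type*} [CommSemiring R]
    {φ : MvPolynomial σ R} {n : ℕ} (hφ : φ.IsHomogeneous n) (r : R) (x : σ → R) :
    eval (r • x) φ = r ^ n * eval x φ := by
  rw [eval_eq, eval_eq, Finset.mul_sum]
  refine Finset.sum_congr rfl fun γ hγ => ?_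
  simp only [Pi.smul_apply, smul_eq_mul, mul_pow, Finset.prod_mul_distrib,
    Finset.prod_pow_eq_pow_sum]
  have hdeg : ∑ i ∈ γ.support, γ i = n := by
    by_contra h
    exact mem_support_iff.mp hγ (hφ.coeff_eq_zero h)
  rw [hdeg, mul_left_comm]

section PolarCoordinates

lemma integral_volumeIoiPow (n : ℕ) (f : ℝ → ℝ) :
    ∫ r : Ioi (0 : ℝ), f r ∂Measure.volumeIoiPow n = ∫ r in Ioi (0 : ℝ), r ^ n * f r := by
  simp only [Measure.volumeIoiPow, ENNReal.ofReal]
  rw [integral_withDensity_eq_integral_smul (measurable_subtype_coe.pow_const _).real_toNNReal,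
    integral_subtype_comap measurableSet_Ioi fun r => (r ^ n).toNNReal • f r]
  refine setIntegral_congr_fun measurableSet_Ioi fun r hr => ?_
  rw [NNReal.smul_def, Real.coe_toNNReal _ (pow_nonneg (le_of_lt hr) _), smul_eq_mul]

variable {E : Type*} [NormedAddCommGroup E] [NormedSpace ℝ E] [FiniteDimensional ℝ E]
  [Nontrivial E] [MeasurableSpace E] [BorelSpace E] (μ : Measure E) [μ.IsAddHaarMeasure]

lemma integral_mul_fun_norm_of_homogeneous {k : ℕ} {f : E → ℝ}
    (hf : ∀ r : ℝ, 0 < r → ∀ x, f (r • x) = r ^ k * f x) (g : ℝ → ℝ) :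
    ∫ x, f x * g ‖x‖ ∂μ =
      (∫ y : Metric.sphere (0 : E) 1, f y ∂μ.toSphere) *
        ∫ r in Ioi (0 : ℝ), r ^ (Module.finrank ℝ E - 1 + k) * g r := by
  have polar (x : ({0}ᶜ : Set E)) : f x * g ‖(x : E)‖ =
      f (homeomorphUnitSphereProd E x).1 *
        ((homeomorphUnitSphereProd E x).2 ^ k * g (homeomorphUnitSphereProd E x).2) := by
    have hx : ‖(x : E)‖ ≠ 0 := norm_ne_zero_iff.mpr x.2
    simp only [homeomorphUnitSphereProd_apply_fst_coe, homeomorphUnitSphereProd_apply_snd_coe]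
    conv_lhs => rw [← smul_inv_smul₀ hx (x : E), hf _ (norm_pos_iff.mpr x.2)]
    rw [smul_inv_smul₀ hx]
    ring
  calc ∫ x, f x * g ‖x‖ ∂μ = ∫ x : ({0}ᶜ : Set E), f x * g ‖(x : E)‖ ∂μ.comap (↑) := by
        rw [integral_subtype_comap (measurableSet_singleton _).compl fun x => f x * g ‖x‖,
          restrict_compl_singleton]
    _ = ∫ z, f z.1 * (z.2 ^ k * g z.2)
          ∂μ.toSphere.prod (Measure.volumeIoiPow (Module.finrank ℝ E - 1)) := by
        simp only [polar]
        exact μ.measurePreserving_homeomorphUnitSphereProd.integral_comp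
          (Homeomorph.measurableEmbedding _) fun z => f z.1 * (z.2 ^ k * g z.2)
    _ = _ := by
        rw [integral_prod_mul (fun y : Metric.sphere (0 : E) 1 => f y)
          (fun r : Ioi (0 : ℝ) => (r : ℝ) ^ k * g r),
          integral_volumeIoiPow _ fun r => r ^ k * g r]
        simp only [pow_add, mul_assoc]

end PolarCoordinates

lemma integral_Ioi_pow_mul_exp_neg_sq_pos (j : ℕ) :
    0 < ∫ r in Ioi (0 : ℝ), r ^ j * exp (-r ^ 2) := by
  have hint : IntegrableOn (fun r : ℝ => r ^ j * exp (-r ^ 2)) (Ioi 0) := by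
    simpa [rpow_natCast] using integrableOn_rpow_mul_exp_neg_mul_sq (b := 1) one_pos
      (s := j) (by linarith [j.cast_nonneg (α := ℝ)])
  have hpos : ∀ r ∈ Ioi (0 : ℝ), 0 < r ^ j * exp (-r ^ 2) := fun r hr =>
    mul_pos (pow_pos hr _) (exp_pos _)
  rw [setIntegral_pos_iff_support_of_nonneg_ae
    ((ae_restrict_iff' measurableSet_Ioi).mpr (ae_of_all _ fun r hr => (hpos r hr).le)) hint,
    inter_eq_right.mpr fun r hr => Function.mem_support.mpr (hpos r hr).ne']
  simp

section UnitBall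

variable {d : ℕ}

lemma evalP_mul (f g : MvPolynomial (Fin d) ℝ) (x : EuclideanSpace ℝ (Fin d)) :
    evalP (f * g) x = evalP f x * evalP g x :=
  map_mul _ f g

lemma evalP_smul_of_isHomogeneous {k : ℕ} {u : MvPolynomial (Fin d) ℝ} (hu : u.IsHomogeneous k)
    (r : ℝ) (x : EuclideanSpace ℝ (Fin d)) : evalP u (r • x) = r ^ k * evalP u x :=
  hu.eval_smul r (fun i => x i)

lemma integral_evalP_mul_exp_neg_norm_sq (p : MvPolynomial (Fin d) ℝ) :
    ∫ x : EuclideanSpace ℝ (Fin d), evalP p x * exp (-‖x‖ ^ 2) = gaussianIntegral d p := by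
  rw [← (PiLp.volume_preserving_toLp (Fin d)).integral_comp
    (MeasurableEquiv.toLp 2 _).measurableEmbedding]
  simp only [EuclideanSpace.real_norm_sq_eq]
  rfl

lemma integral_sphere_evalP_mul_eq_zero_of_harmonic (hd : 1 ≤ d) {n m : ℕ}
    {f g : MvPolynomial (Fin d) ℝ} (hf : f.IsHomogeneous n) (hg : g.IsHomogeneous m)
    (hlf : lap f = 0) (hlg : lap g = 0) (hnm : n ≠ m) :
    ∫ y, evalP f y * evalP g y ∂sphereMeas d = 0 := by
  have : Nonempty (Fin d) := ⟨⟨0, hd⟩⟩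
  have hpolar := integral_mul_fun_norm_of_homogeneous volume
    (fun r _ x => evalP_smul_of_isHomogeneous (hf.mul hg) r x) fun r => exp (-r ^ 2)
  rw [integral_evalP_mul_exp_neg_norm_sq,
    gaussianIntegral_mul_eq_zero_of_harmonic hf hg hlf hlg hnm, eq_comm, mul_eq_zero] at hpolar
  simpa only [sphereMeas, evalP_mul] using
    hpolar.resolve_right (integral_Ioi_pow_mul_exp_neg_sq_pos _).ne'

lemma evalP_one_sub_normSq_mul_of_mem_sphere (Q : MvPolynomial (Fin d) ℝ)
    {y : EuclideanSpace ℝ (Fin d)} (hy : y ∈ Metric.sphere 0 1) :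
    evalP ((1 - normSq d) * Q) y = 0 := by
  have hnorm : ∑ i, y i ^ 2 = 1 := by
    rw [← EuclideanSpace.real_norm_sq_eq, mem_sphere_zero_iff_norm.mp hy, one_pow]
  simp [evalP, normSq, hnorm]

lemma innerNeg2_comm (lam : ℝ) (f g : MvPolynomial (Fin d) ℝ) :
    innerNeg2 d lam f g = innerNeg2 d lam g f := by
  simp only [innerNeg2, mul_comm (evalP f _), mul_comm (evalP (lap f) _)]

lemma innerNeg2_eq_zero_of_harmonic (hd : 1 ≤ d) (lam : ℝ) {n m : ℕ}
    {f g : MvPolynomial (Fin d) ℝ} (hf : f.IsHomogeneous n) (hg : g.IsHomogeneous m)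
    (hlf : lap f = 0) (hlg : lap g = 0) (hnm : n ≠ m) : innerNeg2 d lam f g = 0 := by
  rw [innerNeg2, integral_sphere_evalP_mul_eq_zero_of_harmonic hd hf hg hlf hlg hnm, hlf]
  simp [evalP]

lemma innerNeg2_one_sub_normSq_mul_eq_zero (lam : ℝ) {Y : MvPolynomial (Fin d) ℝ}
    (hY : lap Y = 0) (Q : MvPolynomial (Fin d) ℝ) :
    innerNeg2 d lam Y ((1 - normSq d) * Q) = 0 := by
  have hsphere : ∀ y : Metric.sphere (0 : EuclideanSpace ℝ (Fin d)) 1,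
      evalP Y y * evalP ((1 - normSq d) * Q) y = 0 := fun y => by
    rw [evalP_one_sub_normSq_mul_of_mem_sphere Q y.2, mul_zero]
  rw [innerNeg2, hY]
  simp only [hsphere, integral_zero]
  simp [evalP]

lemma innerNeg2_one_sub_normSq_mul_eq_zero_of_innerDelta (hd : 1 ≤ d) (lam : ℝ)
    {Q h : MvPolynomial (Fin d) ℝ} (hQh : innerDelta d Q h = 0) :
    innerNeg2 d lam ((1 - normSq d) * Q) ((1 - normSq d) * h) = 0 := by
  have hvol : 0 < volB d := ENNReal.toReal_pos (Metric.measure_closedBall_pos _ _ one_pos).ne'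
    measure_closedBall_lt_top.ne
  have hd' : (0 : ℝ) < d := by exact_mod_cast hd
  have hball := (mul_eq_zero.mp hQh).resolve_left (by positivity)
  simp [innerNeg2, hball, evalP_one_sub_normSq_mul_of_mem_sphere]

end UnitBall

theorem stmt14_general (d : ℕ) (hd : 1 ≤ d) (lam : ℝ) (n m : ℕ) (hmn : m < n) :
    (∀ P g : MvPolynomial (Fin d) ℝ,
      ((P.IsHomogeneous n ∧ lap P = 0) ∨
        (∃ Q : MvPolynomial (Fin d) ℝ, P = (1 - normSq d) * Q ∧ Q.totalDegree + 2 = n ∧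
          ∀ h : MvPolynomial (Fin d) ℝ, h.totalDegree + 2 < n → innerDelta d Q h = 0)) →
      ((g.IsHomogeneous m ∧ lap g = 0) ∨
        (∃ h : MvPolynomial (Fin d) ℝ, g = (1 - normSq d) * h ∧ h.totalDegree + 2 = m ∧
          ∀ u : MvPolynomial (Fin d) ℝ, u.totalDegree + 2 < m → innerDelta d h u = 0)) →
      innerNeg2 d lam P g = 0) ∧
    (∀ Y Q : MvPolynomial (Fin d) ℝ, Y.IsHomogeneous n → lap Y = 0 →
      Q.totalDegree + 2 = n →
      (∀ h : MvPolynomial (Fin d) ℝ, h.totalDegree + 2 < n → innerDelta d Q h = 0) →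
      innerNeg2 d lam Y ((1 - normSq d) * Q) = 0) := by
  refine ⟨fun P g hP hg => ?_,
    fun Y Q _ hY _ _ => innerNeg2_one_sub_normSq_mul_eq_zero lam hY Q⟩
  rcases hP with ⟨hPn, hP⟩ | ⟨Q, rfl, -, hQ⟩ <;> rcases hg with ⟨hgm, hg⟩ | ⟨h, rfl, hh, -⟩
  · exact innerNeg2_eq_zero_of_harmonic hd lam hPn hgm hP hg hmn.ne'
  · exact innerNeg2_one_sub_normSq_mul_eq_zero lam hP h
  · rw [innerNeg2_comm]
    exact innerNeg2_one_sub_normSq_mul_eq_zero lam hg Q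
  · exact innerNeg2_one_sub_normSq_mul_eq_zero_of_innerDelta hd lam (hQ h (by omega))

/-- elements of `V_n^d(W_{−2}) = H_n^d ⊕ (1−‖x‖²)V_{n−2}^d(Δ)` are
orthogonal with respect to `⟨·,·⟩_{−2}` to the elements of `V_m^d(W_{−2})` for `m < n`,
and the two components of degree `n` are mutually orthogonal. -/
theorem stmt14 (d : ℕ) (hd : 1 ≤ d) (lam : ℝ) (hlam : 0 < lam) (n m : ℕ) (hmn : m < n) :
    (∀ P g : MvPolynomial (Fin d) ℝ,
      ((P.IsHomogeneous n ∧ lap P = 0) ∨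
        (∃ Q : MvPolynomial (Fin d) ℝ, P = (1 - normSq d) * Q ∧ Q.totalDegree + 2 = n ∧
          ∀ h : MvPolynomial (Fin d) ℝ, h.totalDegree + 2 < n → innerDelta d Q h = 0)) →
      ((g.IsHomogeneous m ∧ lap g = 0) ∨
        (∃ h : MvPolynomial (Fin d) ℝ, g = (1 - normSq d) * h ∧ h.totalDegree + 2 = m ∧
          ∀ u : MvPolynomial (Fin d) ℝ, u.totalDegree + 2 < m → innerDelta d h u = 0)) →
      innerNeg2 d lam P g = 0) ∧
    (∀ Y Q : MvPolynomial (Fin d) ℝ, Y.IsHomogeneous n → lap Y = 0 →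
      Q.totalDegree + 2 = n →
      (∀ h : MvPolynomial (Fin d) ℝ, h.totalDegree + 2 < n → innerDelta d Q h = 0) →
      innerNeg2 d lam Y ((1 - normSq d) * Q) = 0) :=
  stmt14_general d hd lam n m hmn
end
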